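/- If M and N are positive integers with the same set of prime divisors, say M = p₁^{m₁}···p_k^{m_k} and N = p₁^{n₁}···p_k^{n_k} with all exponents positive, and M and N are not both powers of a common integer, then choosing J minimizing m_J/n_J, the integer M^{n_J} equals R · N^{m_J} for some integer R > 1 whose set of prime divisors is a proper subset of the set of prime divisors of M. -/
import Mathlib


/-- If M and N are positive integers with the same set of prime divisors,
M = ∏ pᵢ^mᵢ, N = ∏ pᵢ^nᵢ (distinct primes, positive exponents), M and N are not both
powers of a common integer, and J minimizes m_J/n_J, then M^{n_J} = R · N^{m_J} for
some R > 1 whose set of prime divisors is a proper subset of that of M. -/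
theorem cobham_exponent_step (k : ℕ) (p m n : Fin k → ℕ)
    (hp : ∀ i, (p i).Prime) (hpinj : Function.Injective p)
    (hm : ∀ i, 0 < m i) (hn : ∀ i, 0 < n i)
    (M N : ℕ) (hM : M = ∏ i, p i ^ m i) (hN : N = ∏ i, p i ^ n i)
    (hnot : ¬ ∃ b s t : ℕ, 2 ≤ b ∧ 1 ≤ s ∧ 1 ≤ t ∧ M = b ^ s ∧ N = b ^ t)
    (J : Fin k) (hJ : ∀ i, m J * n i ≤ m i * n J) :
    ∃ R : ℕ, 1 < R ∧ M ^ n J = R * N ^ m J ∧ R.primeFactors ⊂ M.primeFactors := by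
  set e : Fin k → ℕ := fun i => m i * n J - m J * n i with he
  have hMpos : 0 < M := hM ▸ Finset.prod_pos fun i _ => pow_pos (hp i).pos _
  have heqn : M ^ n J = (∏ i, p i ^ e i) * N ^ m J := by
    rw [hM, hN, ← Finset.prod_pow, ← Finset.prod_pow, ← Finset.prod_mul_distrib]
    refine Finset.prod_congr rfl fun i _ => ?_
    rw [← pow_mul, ← pow_mul, ← pow_add]
    congr 1
    show m i * n J = e i + n i * m J
    rw [mul_comm (n i) (m J)]
    exact (Nat.sub_add_cancel (hJ i)).symm
  refine ⟨∏ i, p i ^ e i, ?_, heqn, ?_⟩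
  · -- R > 1
    rcases Nat.lt_or_ge 1 (∏ i, p i ^ e i) with h | h
    · exact h
    exfalso
    have hpos : 0 < ∏ i, p i ^ e i :=
      Finset.prod_pos fun i _ => pow_pos (hp i).pos _
    have h1 : ∏ i, p i ^ e i = 1 := le_antisymm h hpos
    have he0 : ∀ i, e i = 0 := by
      intro i
      by_contra hne
      have hfac : p i ^ e i = 1 :=
        Finset.prod_eq_one_iff_of_one_le'
          (fun j _ => Nat.one_le_iff_ne_zero.mpr (pow_ne_zero _ (hp j).pos.ne')) |>.mp h1 i
          (Finset.mem_univ i)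
      exact absurd hfac (Nat.one_lt_pow hne (hp i).one_lt).ne'
    have heq : ∀ i, m i * n J = m J * n i := by
      intro i
      have h1 := hJ i
      have h2 : m i * n J - m J * n i = 0 := he0 i
      omega
    apply hnot
    set d := Nat.gcd (m J) (n J) with hd
    have hdpos : 0 < d := Nat.gcd_pos_of_pos_left _ (hm J)
    set s := m J / d with hs
    set t := n J / d with ht
    have hco : Nat.Coprime s t := Nat.coprime_div_gcd_div_gcd hdpos
    have hmJ : m J = s * d := (Nat.div_mul_cancel (Nat.gcd_dvd_left _ _)).symm
    have hnJ : n J = t * d := (Nat.div_mul_cancel (Nat.gcd_dvd_right _ _)).symm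
    have hspos : 0 < s := by
      rcases Nat.eq_zero_or_pos s with h' | h'
      · rw [h'] at hmJ; simp at hmJ; exact absurd hmJ (hm J).ne'
      · exact h'
    have htpos : 0 < t := by
      rcases Nat.eq_zero_or_pos t with h' | h'
      · rw [h'] at hnJ; simp at hnJ; exact absurd hnJ (hn J).ne'
      · exact h'
    have key : ∀ i, m i * t = s * n i := by
      intro i
      have h3 : d * (m i * t) = d * (s * n i) := by
        have := heq i
        rw [hmJ, hnJ] at this
        calc d * (m i * t) = m i * (t * d) := by ring
          _ = s * d * n i := this
          _ = d * (s * n i) := by ring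
      exact Nat.eq_of_mul_eq_mul_left hdpos h3
    have hsdvd : ∀ i, s ∣ m i := fun i =>
      Nat.Coprime.dvd_of_dvd_mul_right hco ⟨n i, key i⟩
    set c : Fin k → ℕ := fun i => m i / s with hc
    have hmc : ∀ i, m i = c i * s := fun i => (Nat.div_mul_cancel (hsdvd i)).symm
    have hnc : ∀ i, n i = c i * t := by
      intro i
      have h1 : c i * s * t = s * n i := by rw [← hmc i]; exact key i
      have h2 : s * (c i * t) = s * n i := by rw [← h1]; ring
      exact (Nat.eq_of_mul_eq_mul_left hspos h2).symm
    refine ⟨∏ i, p i ^ c i, s, t, ?_, hspos, htpos, ?_, ?_⟩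
    · have hcJ : 0 < c J := by
        have h' := hm J
        rw [hmc J] at h'
        rcases Nat.eq_zero_or_pos (c J) with h0 | h0
        · rw [h0] at h'; simp at h'
        · exact h0
      have hbpos : 0 < ∏ i, p i ^ c i :=
        Finset.prod_pos fun i _ => pow_pos (hp i).pos _
      have hdvd : p J ^ c J ∣ ∏ i, p i ^ c i :=
        Finset.dvd_prod_of_mem _ (Finset.mem_univ J)
      calc (2 : ℕ) ≤ p J := (hp J).two_le
        _ ≤ p J ^ c J := Nat.le_self_pow hcJ.ne' _
        _ ≤ ∏ i, p i ^ c i := Nat.le_of_dvd hbpos hdvd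
    · rw [hM, ← Finset.prod_pow]
      exact Finset.prod_congr rfl fun i _ => by rw [← pow_mul, ← hmc i]
    · rw [hN, ← Finset.prod_pow]
      exact Finset.prod_congr rfl fun i _ => by rw [← pow_mul, ← hnc i]
  · -- proper subset
    have hsub : (∏ i, p i ^ e i).primeFactors ⊆ M.primeFactors := by
      have hdvd : (∏ i, p i ^ e i) ∣ M ^ n J := ⟨N ^ m J, heqn⟩
      have := Nat.primeFactors_mono hdvd (pow_ne_zero _ hMpos.ne')
      rwa [Nat.primeFactors_pow M (hn J).ne'] at this
    have hmem : p J ∈ M.primeFactors := by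
      refine Nat.mem_primeFactors.mpr ⟨hp J, ?_, hMpos.ne'⟩
      rw [hM]
      exact dvd_trans (dvd_pow_self _ (hm J).ne') (Finset.dvd_prod_of_mem _ (Finset.mem_univ J))
    have hnotmem : p J ∉ (∏ i, p i ^ e i).primeFactors := by
      intro hcon
      have hdvd : p J ∣ ∏ i, p i ^ e i := Nat.dvd_of_mem_primeFactors hcon
      obtain ⟨i, _, hdvd'⟩ := (Nat.Prime.prime (hp J)).dvd_finset_prod_iff _ |>.mp hdvd
      have : p J = p i := ((Nat.prime_dvd_prime_iff_eq (hp J) (hp i)).mp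
        ((hp J).dvd_of_dvd_pow hdvd'))
      have hiJ : i = J := hpinj this.symm
      rw [hiJ] at hdvd'
      have heJ : e J = 0 := by simp [he, mul_comm]
      rw [heJ, pow_zero] at hdvd'
      exact absurd (Nat.le_of_dvd one_pos hdvd') (by have := (hp J).two_le; omega)
    exact (Finset.ssubset_iff_of_subset hsub).mpr ⟨p J, hmem, hnotmem⟩
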